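/- If F is an edge cut of a simple graph G, then E(G − F) ≤ E(G), where G − F is the subgraph obtained from G by deleting the edges in F, and E denotes graph energy. -/

import Mathlib

open Polynomial MeasureTheory

/-- The adjacency matrix of a simple graph over `ℝ` is Hermitian. -/
lemma adjHerm {V : Type*} [Fintype V] (G : SimpleGraph V) [DecidableRel G.Adj] :
    (SimpleGraph.adjMatrix ℝ G).IsHermitian := by
  ext i j
  simp [Matrix.conjTranspose_apply, SimpleGraph.adj_comm]

/-- The energy of a graph: sum of absolute values of adjacency eigenvalues. -/
noncomputable def energy {V : Type*} [Fintype V] [DecidableEq V] (G : SimpleGraph V)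
    [DecidableRel G.Adj] : ℝ :=
  ∑ i, |(adjHerm G).eigenvalues i|

/-- `SnE n k` is the graph `S_{n, n-1+k}`: the star on `n` vertices with center `0`,
plus `k` extra edges joining the fixed leaf `1` to the leaves `2, …, k+1`. -/
def SnE (n k : ℕ) : SimpleGraph (Fin n) where
  Adj v w := v ≠ w ∧ (v.val = 0 ∨ w.val = 0 ∨
    (v.val = 1 ∧ 2 ≤ w.val ∧ w.val ≤ k + 1) ∨ (w.val = 1 ∧ 2 ≤ v.val ∧ v.val ≤ k + 1))
  symm := ⟨by intro v w h; exact ⟨h.1.symm, by tauto⟩⟩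
  loopless := ⟨by intro v h; exact h.1 rfl⟩

instance {n k : ℕ} : DecidableRel (SnE n k).Adj := fun v w => by
  unfold SnE; exact inferInstanceAs (Decidable (_ ∧ _))

instance {α β : Type*} (G : SimpleGraph α) (H : SimpleGraph β) [DecidableRel G.Adj]
    [DecidableRel H.Adj] : DecidableRel (G ⊕g H).Adj := fun u v =>
  match u, v with
  | Sum.inl a, Sum.inl b => decidable_of_iff (G.Adj a b) (by simp [SimpleGraph.sum])
  | Sum.inr a, Sum.inr b => decidable_of_iff (H.Adj a b) (by simp [SimpleGraph.sum])
  | Sum.inl _, Sum.inr _ => .isFalse (by simp [SimpleGraph.sum])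
  | Sum.inr _, Sum.inl _ => .isFalse (by simp [SimpleGraph.sum])


/-- `cutDelete G S` is the graph obtained from `G` by deleting the edge cut consisting of
all edges between `S` and its complement. -/
def cutDelete {V : Type*} (G : SimpleGraph V) (S : Set V) : SimpleGraph V where
  Adj v w := G.Adj v w ∧ (v ∈ S ↔ w ∈ S)
  symm := ⟨fun v w h => ⟨G.symm.symm v w h.1, h.2.symm⟩⟩
  loopless := ⟨fun v h => G.loopless.irrefl v h.1⟩

instance {V : Type*} (G : SimpleGraph V) [DecidableRel G.Adj] (S : Set V)
    [DecidablePred (· ∈ S)] : DecidableRel (cutDelete G S).Adj := fun v w => by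
  unfold cutDelete; exact inferInstanceAs (Decidable (_ ∧ _))

/-!
For a real symmetric matrix `B`, the sum `∑ |λᵢ(B)|` is the maximum of `tr (U B)` over orthogonal
`U`. If `D` is the diagonal `±1` matrix with `+1` exactly on `S`, then `D A D` flips the sign of
the cut edges, so the adjacency matrix of `G - F` is `B = (A + D A D) / 2`. Hence for every
orthogonal `U`, `tr (U B) = (tr (U A) + tr ((D U D) A)) / 2 ≤ E(G)`.
-/

namespace Matrix

variable {n : Type*} [Fintype n] [DecidableEq n]

theorem diagonal_mem_unitaryGroup {α : Type*} [CommRing α] [StarRing α] {d : n → α}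
    (hd : ∀ i, star (d i) * d i = 1) : diagonal d ∈ unitaryGroup n α := by
  rw [mem_unitaryGroup_iff', star_eq_conjTranspose, diagonal_conjTranspose, diagonal_mul_diagonal]
  simp [hd]

theorem diagonal_ite_one_neg_one_mem_unitaryGroup (p : n → Prop) [DecidablePred p] :
    diagonal (fun i => if p i then (1 : ℝ) else -1) ∈ unitaryGroup n ℝ :=
  diagonal_mem_unitaryGroup fun i => by split_ifs <;> simp

namespace IsHermitian

variable {A : Matrix n n ℝ}

theorem trace_mul_eq_sum_mul_eigenvalues (hA : A.IsHermitian) (U : Matrix n n ℝ) :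
    (U * A).trace = ∑ i, (star (hA.eigenvectorUnitary : Matrix n n ℝ) * U *
      hA.eigenvectorUnitary) i i * hA.eigenvalues i := by
  set V : Matrix n n ℝ := (hA.eigenvectorUnitary : Matrix n n ℝ)
  have hspec : A = V * diagonal hA.eigenvalues * star V := hA.spectral_theorem
  conv_lhs => rw [hspec, ← mul_assoc, ← mul_assoc, trace_mul_comm, ← mul_assoc, ← mul_assoc]
  simp [trace, mul_diagonal]

theorem trace_mul_le_sum_abs_eigenvalues (hA : A.IsHermitian) {U : Matrix n n ℝ}
    (hU : U ∈ unitaryGroup n ℝ) :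
    (U * A).trace ≤ ∑ i, |hA.eigenvalues i| := by
  have hW : star (hA.eigenvectorUnitary : Matrix n n ℝ) * U * hA.eigenvectorUnitary ∈
      unitaryGroup n ℝ :=
    mul_mem (mul_mem (Unitary.star_mem hA.eigenvectorUnitary.2) hU) hA.eigenvectorUnitary.2
  rw [hA.trace_mul_eq_sum_mul_eigenvalues]
  refine Finset.sum_le_sum fun i _ => ?_
  calc _ ≤ |_ * hA.eigenvalues i| := le_abs_self _
    _ = ‖_‖ * |hA.eigenvalues i| := by rw [abs_mul, Real.norm_eq_abs]
    _ ≤ 1 * |hA.eigenvalues i| := by gcongr; exact entry_norm_bound_of_unitary hW i i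
    _ = |hA.eigenvalues i| := one_mul _

theorem exists_trace_mul_eq_sum_abs_eigenvalues (hA : A.IsHermitian) :
    ∃ U ∈ unitaryGroup n ℝ, (U * A).trace = ∑ i, |hA.eigenvalues i| := by
  set V : Matrix n n ℝ := (hA.eigenvectorUnitary : Matrix n n ℝ)
  set D := diagonal fun i => if 0 ≤ hA.eigenvalues i then (1 : ℝ) else -1
  have hVV : star V * V = 1 := Unitary.coe_star_mul_self _
  refine ⟨V * D * star V, mul_mem (mul_mem hA.eigenvectorUnitary.2
    (diagonal_ite_one_neg_one_mem_unitaryGroup _)) (Unitary.star_mem hA.eigenvectorUnitary.2), ?_⟩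
  have hD : star V * (V * D * star V) * V = D := by
    rw [← mul_assoc, ← mul_assoc, hVV, one_mul, mul_assoc, hVV, mul_one]
  rw [hA.trace_mul_eq_sum_mul_eigenvalues, hD]
  refine Finset.sum_congr rfl fun i _ => ?_
  by_cases h : 0 ≤ hA.eigenvalues i
  · simp [D, h, abs_of_nonneg h]
  · simp [D, h, abs_of_neg (not_le.mp h)]

theorem sum_abs_eigenvalues_le_of_eq_half_add_conj {B : Matrix n n ℝ} (hA : A.IsHermitian)
    (hB : B.IsHermitian) {D : Matrix n n ℝ} (hD : D ∈ unitaryGroup n ℝ)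
    (hBA : B = (2⁻¹ : ℝ) • (A + D * A * star D)) :
    ∑ i, |hB.eigenvalues i| ≤ ∑ i, |hA.eigenvalues i| := by
  obtain ⟨U, hU, hUB⟩ := hB.exists_trace_mul_eq_sum_abs_eigenvalues
  have hconj : (U * (D * A * star D)).trace = (star D * U * D * A).trace := by
    rw [← mul_assoc, ← mul_assoc, trace_mul_comm, ← mul_assoc, ← mul_assoc]
  have hsplit : (U * B).trace = 2⁻¹ * ((U * A).trace + (star D * U * D * A).trace) := by
    rw [hBA, Matrix.mul_smul, trace_smul, mul_add, trace_add, hconj, smul_eq_mul]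
  have h₁ := hA.trace_mul_le_sum_abs_eigenvalues hU
  have h₂ := hA.trace_mul_le_sum_abs_eigenvalues
    (mul_mem (mul_mem (Unitary.star_mem hD) hU) hD)
  linarith

end IsHermitian
end Matrix

open Matrix

@[simp]
theorem cutDelete_adj {V : Type*} (G : SimpleGraph V) (S : Set V) {v w : V} :
    (cutDelete G S).Adj v w ↔ G.Adj v w ∧ (v ∈ S ↔ w ∈ S) :=
  Iff.rfl

theorem adjMatrix_cutDelete {V : Type*} [Fintype V] [DecidableEq V] (G : SimpleGraph V)
    [DecidableRel G.Adj] (S : Set V) [DecidablePred (· ∈ S)] :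
    (cutDelete G S).adjMatrix ℝ = (2⁻¹ : ℝ) • (G.adjMatrix ℝ +
      diagonal (fun v => if v ∈ S then 1 else -1) * G.adjMatrix ℝ *
        star (diagonal fun v => if v ∈ S then 1 else -1)) := by
  ext v w
  rw [Matrix.smul_apply, Matrix.add_apply, star_eq_conjTranspose, diagonal_conjTranspose,
    mul_diagonal, diagonal_mul]
  by_cases hv : v ∈ S <;> by_cases hw : w ∈ S <;> by_cases hvw : G.Adj v w <;>
    norm_num [SimpleGraph.adjMatrix_apply, hv, hw, hvw]

/-- Deleting an edge cut does not increase the energy of a graph (Day–So). -/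
theorem energy_deleteEdgeCut_le {V : Type*} [Fintype V] [DecidableEq V]
    (G : SimpleGraph V) [DecidableRel G.Adj] (S : Set V) [DecidablePred (· ∈ S)] :
    energy (cutDelete G S) ≤ energy G :=
  (adjHerm G).sum_abs_eigenvalues_le_of_eq_half_add_conj (adjHerm _)
    (diagonal_ite_one_neg_one_mem_unitaryGroup _) (adjMatrix_cutDelete G S)
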